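/- arXiv:2402.17552 — 2 statements merged into one kernel-verified Lean document; each statement's English description precedes it below -/
import Mathlib

section
/- Let A ∈ L(K,H) and suppose A admits an indefinite I-inverse, i.e., an indefinite W-inverse with W = I the identity on H. Then the closure of ran A is a regular subspace of the Krein space H: H = cl(ran A) + ker A^# and cl(ran A) ∩ ker A^# = {0} (note ker A^# = {h ∈ H : [h, Az] = 0 for all z ∈ K}, the orthogonal companion of ran A). -/
/-!
For `W = I` the functional `z ↦ [Az − x, Az − x]` is a real quadratic function on every real line
through a minimiser, so minimality of `u = Gx` forces `Au − x` to be `J_H`-orthogonal to `ran A`,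
i.e. `x − Au ∈ ker A^#`; this gives `x = Au + (x − Au)`. If `x ∈ cl(ran A) ∩ ker A^#`, decompose
`J_H x = m + h` the same way: then `⟪x, x⟫ = [m, x] + [h, x] = 0`.
-/

open ContinuousLinearMap

noncomputable section

variable {H K : Type*} [NormedAddCommGroup H] [InnerProductSpace ℂ H] [CompleteSpace H]
  [NormedAddCommGroup K] [InnerProductSpace ℂ K] [CompleteSpace K]

/-- The Krein adjoint `A^# = J_K ∘ A* ∘ J_H` of an operator `A : K →L[ℂ] H` between
Krein spaces with signature operators `JK` and `JH`. -/
def kreinAdjoint (JK : K →L[ℂ] K) (JH : H →L[ℂ] H) (A : K →L[ℂ] H) : H →L[ℂ] K :=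
  JK ∘L (ContinuousLinearMap.adjoint A) ∘L JH

/-- `u` is an indefinite weighted least squares solution (W-ILSS) of `A z = x`:
`[W(Au−x),Au−x] ≤ [W(Az−x),Az−x]` for all `z`, where `[x,y] = ⟨J_H x, y⟩`. -/
def IsWILSS (JH : H →L[ℂ] H) (A : K →L[ℂ] H) (W : H →L[ℂ] H) (x : H) (u : K) : Prop :=
  ∀ z : K,
    (inner ℂ (JH (W (A u - x))) (A u - x) : ℂ).re ≤
      (inner ℂ (JH (W (A z - x))) (A z - x) : ℂ).re

open scoped InnerProductSpace

section KreinOrthogonal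

variable {𝕜 E : Type*} [RCLike 𝕜] [NormedAddCommGroup E] [InnerProductSpace 𝕜 E]

/-- The `J`-orthogonal companion `M^[⊥]` of `M` for the indefinite inner product
`[x, y] = ⟪J x, y⟫`. -/
def kreinOrthogonal (J : E →ₗ[𝕜] E) (M : Submodule 𝕜 E) : Submodule 𝕜 E :=
  Mᗮ.comap J

theorem mem_kreinOrthogonal_iff {J : E →ₗ[𝕜] E} {M : Submodule 𝕜 E} {h : E} :
    h ∈ kreinOrthogonal J M ↔ ∀ m ∈ M, ⟪J h, m⟫_𝕜 = 0 :=
  Submodule.mem_orthogonal' M (J h)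

theorem kreinOrthogonal_topologicalClosure (J : E →ₗ[𝕜] E) (M : Submodule 𝕜 E) :
    kreinOrthogonal J M.topologicalClosure = kreinOrthogonal J M := by
  rw [kreinOrthogonal, kreinOrthogonal, Submodule.orthogonal_closure]

theorem LinearMap.IsSymmetric.re_inner_add_real_smul {T : E →ₗ[𝕜] E} (hT : T.IsSymmetric)
    (r v : E) (t : ℝ) :
    RCLike.re ⟪T (r + (t : 𝕜) • v), r + (t : 𝕜) • v⟫_𝕜 =
      t ^ 2 * RCLike.re ⟪T v, v⟫_𝕜 + 2 * t * RCLike.re ⟪T r, v⟫_𝕜 + RCLike.re ⟪T r, r⟫_𝕜 := by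
  have hcross : RCLike.re ⟪T v, r⟫_𝕜 = RCLike.re ⟪T r, v⟫_𝕜 := by
    rw [hT, ← inner_conj_symm, RCLike.conj_re]
  simp only [map_add, map_smul, inner_add_left, inner_add_right, inner_smul_left,
    inner_smul_right, RCLike.conj_ofReal, map_add, RCLike.re_ofReal_mul, hcross]
  ring

theorem LinearMap.IsSymmetric.mem_kreinOrthogonal_of_forall_re_inner_le {T : E →ₗ[𝕜] E}
    (hT : T.IsSymmetric) {S : Submodule 𝕜 E} {r : E}
    (hmin : ∀ v ∈ S, RCLike.re ⟪T r, r⟫_𝕜 ≤ RCLike.re ⟪T (r + v), r + v⟫_𝕜) :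
    r ∈ kreinOrthogonal T S := by
  have hre : ∀ v ∈ S, RCLike.re ⟪T r, v⟫_𝕜 = 0 := by
    intro v hv
    have hquad : ∀ t : ℝ,
        0 ≤ RCLike.re ⟪T v, v⟫_𝕜 * (t * t) + 2 * RCLike.re ⟪T r, v⟫_𝕜 * t + 0 := by
      intro t
      have := hmin _ (S.smul_mem (t : 𝕜) hv)
      rw [hT.re_inner_add_real_smul] at this
      linarith
    have := discrim_le_zero hquad
    rw [discrim] at this
    nlinarith [sq_nonneg (RCLike.re ⟪T r, v⟫_𝕜)]
  refine mem_kreinOrthogonal_iff.2 fun v hv => RCLike.ext ?_ ?_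
  · simpa using hre v hv
  · -- the imaginary part is, up to sign, the real part in the direction `I • v`
    have := hre _ (S.smul_mem RCLike.I hv)
    rw [inner_smul_right, RCLike.I_mul_re, neg_eq_zero] at this
    simpa using this

theorem eq_zero_of_mem_kreinOrthogonal_of_forall_eq_add {J : E →ₗ[𝕜] E} (hJ : J.IsSymmetric)
    (hJs : Function.Surjective J) {M : Submodule 𝕜 E}
    (hdecomp : ∀ y, ∃ m ∈ M, ∃ h ∈ kreinOrthogonal J M, y = m + h) {x : E} (hxM : x ∈ M)
    (hx : x ∈ kreinOrthogonal J M) : x = 0 := by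
  obtain ⟨y, hy⟩ := hJs x
  obtain ⟨m, hm, h, hh, rfl⟩ := hdecomp y
  have hmx : ⟪J m, x⟫_𝕜 = 0 := by
    rw [hJ, ← inner_conj_symm, mem_kreinOrthogonal_iff.1 hx m hm, map_zero]
  have hhx : ⟪J h, x⟫_𝕜 = 0 := mem_kreinOrthogonal_iff.1 hh x hxM
  rw [← inner_self_eq_zero (𝕜 := 𝕜)]
  nth_rw 1 [← hy]
  rw [map_add, inner_add_left, hmx, hhx, add_zero]

end KreinOrthogonal

theorem kreinAdjoint_apply_eq_zero_iff {JK : K →L[ℂ] K} (hJK : JK ∘L JK = 1) (JH : H →L[ℂ] H)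
    (A : K →L[ℂ] H) (h : H) :
    kreinAdjoint JK JH A h = 0 ↔ h ∈ kreinOrthogonal (JH : H →ₗ[ℂ] H) A.range := by
  have hJK_inj : Function.Injective JK :=
    Function.LeftInverse.injective (g := JK) fun v => by simpa using congr($hJK v)
  rw [kreinAdjoint, comp_apply, comp_apply, ← map_zero JK, hJK_inj.eq_iff, kreinOrthogonal,
    Submodule.mem_comap, orthogonal_range]
  rfl

omit [CompleteSpace K] in
theorem IsWILSS.sub_mem_kreinOrthogonal {JH : H →L[ℂ] H} (hJH : IsSelfAdjoint JH)
    {A : K →L[ℂ] H} {x : H} {u : K} (hu : IsWILSS JH A 1 x u) :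
    x - A u ∈ kreinOrthogonal (JH : H →ₗ[ℂ] H) A.range := by
  rw [← neg_sub]
  refine neg_mem (hJH.isSymmetric.mem_kreinOrthogonal_of_forall_re_inner_le ?_)
  rintro _ ⟨z, rfl⟩
  simpa only [one_apply_eq_self, map_add, add_sub_right_comm, ContinuousLinearMap.coe_coe,
    RCLike.re_to_complex] using hu (u + z)

theorem stmt4_general
    (JH : H →L[ℂ] H) (hJHsa : IsSelfAdjoint JH) (hJH2 : JH ∘L JH = 1)
    (JK : K →L[ℂ] K) (hJK2 : JK ∘L JK = 1)
    (A : K →L[ℂ] H)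
    (hG : ∃ G : H →L[ℂ] K, ∀ x : H, IsWILSS JH A (1 : H →L[ℂ] H) x (G x)) :
    (∀ x : H, ∃ m ∈ closure (Set.range A), ∃ h : H,
        kreinAdjoint JK JH A h = 0 ∧ x = m + h) ∧
      (∀ x ∈ closure (Set.range A), kreinAdjoint JK JH A x = 0 → x = 0) := by
  obtain ⟨G, hG⟩ := hG
  set M := A.range.topologicalClosure
  have hM : closure (Set.range A) = (M : Set H) := by
    rw [Submodule.topologicalClosure_coe, LinearMap.coe_range, ContinuousLinearMap.coe_coe]
  have hMperp : kreinOrthogonal (JH : H →ₗ[ℂ] H) M = kreinOrthogonal JH A.range :=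
    kreinOrthogonal_topologicalClosure _ _
  have hker : ∀ h, kreinAdjoint JK JH A h = 0 ↔ h ∈ kreinOrthogonal (JH : H →ₗ[ℂ] H) M := by
    intro h
    rw [hMperp, kreinAdjoint_apply_eq_zero_iff hJK2]
  have hdecomp : ∀ x, ∃ m ∈ M, ∃ h ∈ kreinOrthogonal (JH : H →ₗ[ℂ] H) M, x = m + h := fun x =>
    ⟨A (G x), A.range.le_topologicalClosure (LinearMap.mem_range_self _ _), x - A (G x),
      hMperp ▸ (hG x).sub_mem_kreinOrthogonal hJHsa, (add_sub_cancel _ _).symm⟩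
  have hJH_surj : Function.Surjective JH := fun x => ⟨JH x, by simpa using congr($hJH2 x)⟩
  rw [hM]
  refine ⟨fun x => ?_, fun x hxM hx => ?_⟩
  · obtain ⟨m, hm, h, hh, rfl⟩ := hdecomp x
    exact ⟨m, hm, h, (hker h).2 hh, rfl⟩
  · exact eq_zero_of_mem_kreinOrthogonal_of_forall_eq_add hJHsa.isSymmetric hJH_surj hdecomp hxM
      ((hker x).1 hx)

/-- if `A` admits an indefinite `I`-inverse, then `cl(ran A)` is a regular
subspace of the Krein space `H`: `H = cl(ran A) + ker A^#` and
`cl(ran A) ∩ ker A^# = {0}`. -/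
theorem stmt4
    [TopologicalSpace.SeparableSpace H] [TopologicalSpace.SeparableSpace K]
    (JH : H →L[ℂ] H) (hJHsa : IsSelfAdjoint JH) (hJH2 : JH ∘L JH = 1)
    (JK : K →L[ℂ] K) (hJKsa : IsSelfAdjoint JK) (hJK2 : JK ∘L JK = 1)
    (A : K →L[ℂ] H)
    (hG : ∃ G : H →L[ℂ] K, ∀ x : H, IsWILSS JH A (1 : H →L[ℂ] H) x (G x)) :
    (∀ x : H, ∃ m ∈ closure (Set.range A), ∃ h : H,
        kreinAdjoint JK JH A h = 0 ∧ x = m + h) ∧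
      (∀ x ∈ closure (Set.range A), kreinAdjoint JK JH A x = 0 → x = 0) :=
  stmt4_general JH hJHsa hJH2 JK hJK2 A hG
end
end

section
/- Let A ∈ L(K,H) and let W ∈ L(H) be Krein-selfadjoint and trace class. The following are equivalent: (i) ran A is W-nonnegative and there exists X₀ ∈ L(H,K) such that tr_{J_H}((AX₀−I)^# W (AX₀−I)) ≤ tr_{J_H}((AX−I)^# W (AX−I)) for every X ∈ L(H,K); (ii) ran A is W-nonnegative and ran A + ker(A^# W) = H; (iii) there exists X₀ ∈ L(H,K) such that (AX−I)^# W (AX−I) − (AX₀−I)^# W (AX₀−I) is Krein-positive for every X ∈ L(H,K). In this case, any X₀ satisfying (iii) also attains the minimum in (i). -/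
open ContinuousLinearMap

noncomputable section

variable {H K : Type*} [NormedAddCommGroup H] [InnerProductSpace ℂ H] [CompleteSpace H]
  [NormedAddCommGroup K] [InnerProductSpace ℂ K] [CompleteSpace K]

/-- An operator `S ∈ L(H)` is Krein-positive: `S^# = S` and `[Sx,x] ≥ 0` for all `x`. -/
def KreinPositive (JH : H →L[ℂ] H) (S : H →L[ℂ] H) : Prop :=
  kreinAdjoint JH JH S = S ∧ ∀ x : H, 0 ≤ (inner ℂ (JH (S x)) x : ℂ).re

/-- The error operator `(AX − I)^# W (AX − I)`. -/
def errOp (JH : H →L[ℂ] H) (A : K →L[ℂ] H) (W : H →L[ℂ] H) (X : H →L[ℂ] K) :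
    H →L[ℂ] H :=
  kreinAdjoint JH JH (A ∘L X - 1) ∘L (W ∘L (A ∘L X - 1))

/-- `S` is a Hilbert–Schmidt operator (w.r.t. the Hilbert basis `b`; this is in fact
independent of the basis). -/
def IsHilbertSchmidt {ι : Type*} (b : HilbertBasis ι ℂ H) (S : H →L[ℂ] H) : Prop :=
  Summable fun i => ‖S (b i)‖ ^ 2

/-- `S` is trace class: it is the product of two Hilbert–Schmidt operators. -/
def IsTraceClass {ι : Type*} (b : HilbertBasis ι ℂ H) (S : H →L[ℂ] H) : Prop :=
  ∃ S₁ S₂ : H →L[ℂ] H, IsHilbertSchmidt b S₁ ∧ IsHilbertSchmidt b S₂ ∧ S = S₁ ∘L S₂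

/-- The `J`-trace `tr_J(S) = tr(J∘S)` of a (trace-class) operator `S`, computed in the
Hilbert basis `b` (real because `J∘S` is selfadjoint in the situations considered). -/
def trJ {ι : Type*} (JH : H →L[ℂ] H) (b : HilbertBasis ι ℂ H) (S : H →L[ℂ] H) : ℝ :=
  ∑' i, (inner ℂ (JH (S (b i))) (b i) : ℂ).re

/-!
Put `G = J_H W`, which is selfadjoint in the Hilbert sense. The error operator is
`J_H (AX - I)* G (AX - I)`, so the Krein order and the `J_H`-trace both depend only on the
quadratic forms `x ↦ ⟨G (AX - I) x, (AX - I) x⟩`. Perturb `X₀` to `X₀ + cΔ`. If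
`2 Re (c w) + |c|² a ≥ 0` for every `c ∈ ℂ`, then `w = 0` and `a ≥ 0`. Hence both (i) and (iii)
give that `⟨G A z, A z⟩ ≥ 0` for all `z` and that `X₀` solves the normal equation
`A* G (AX₀ - I) = 0`. Conversely, the normal equation together with nonnegativity gives the
Krein inequality at each point, which is (iii), and summing over a Hilbert basis gives the
trace inequality. Condition (ii) says that `ran (A* G) ⊆ ran (A* G A)`. Douglas' factorization
lemma (via the closed graph theorem) then yields a bounded solution `X₀` of the normal equation.
-/

open scoped InnerProductSpace ComplexConjugate

theorem Complex.nonneg_and_eq_zero_of_forall_quadratic_nonneg {a : ℝ} {w : ℂ}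
    (h : ∀ c : ℂ, 0 ≤ 2 * (c * w).re + ‖c‖ ^ 2 * a) : 0 ≤ a ∧ w = 0 := by
  have hw : w = 0 := by
    by_contra hw
    set t : ℝ := (|a| + 1)⁻¹
    have ht : 0 < t := by positivity
    have hta : t * a < 1 := by
      have : t * (|a| + 1) = 1 := inv_mul_cancel₀ (by positivity)
      nlinarith [le_abs_self a]
    have hn : 0 < ‖w‖ ^ 2 := by positivity
    -- test the inequality at `c = -t w̄`, where the linear term `-2 t ‖w‖²` dominates
    have := h (-t * conj w)
    rw [mul_assoc, Complex.conj_mul', norm_mul, norm_neg, Complex.norm_real, Complex.norm_conj,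
      Real.norm_of_nonneg ht.le, ← Complex.ofReal_pow, ← Complex.ofReal_neg,
      ← Complex.ofReal_mul, Complex.ofReal_re] at this
    nlinarith [mul_pos (mul_pos ht hn) (sub_pos.2 hta)]
  subst hw
  simpa using h 1

section QuadraticForm

variable {E : Type*} [NormedAddCommGroup E] [InnerProductSpace ℂ E]

theorem LinearMap.IsSymmetric.re_inner_add_smul {G : E →L[ℂ] E}
    (hG : (G : E →ₗ[ℂ] E).IsSymmetric) (u w : E) (c : ℂ) :
    (⟪G (u + c • w), u + c • w⟫_ℂ).re =
      (⟪G u, u⟫_ℂ).re + 2 * (c * ⟪G u, w⟫_ℂ).re + ‖c‖ ^ 2 * (⟪G w, w⟫_ℂ).re := by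
  have hwu : ⟪G w, u⟫_ℂ = conj ⟪G u, w⟫_ℂ := by
    rw [inner_conj_symm]
    exact hG w u
  simp only [map_add, map_smul, inner_add_left, inner_add_right, inner_smul_left,
    inner_smul_right, hwu, mul_add, ← mul_assoc, Complex.mul_conj', ← map_mul, Complex.add_re,
    Complex.conj_re, ← Complex.ofReal_pow, Complex.re_ofReal_mul]
  ring

theorem LinearMap.IsSymmetric.nonneg_and_inner_eq_zero_of_forall_le {G : E →L[ℂ] E}
    (hG : (G : E →ₗ[ℂ] E).IsSymmetric) {u w : E}
    (h : ∀ c : ℂ, (⟪G u, u⟫_ℂ).re ≤ (⟪G (u + c • w), u + c • w⟫_ℂ).re) :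
    0 ≤ (⟪G w, w⟫_ℂ).re ∧ ⟪G u, w⟫_ℂ = 0 :=
  Complex.nonneg_and_eq_zero_of_forall_quadratic_nonneg fun c => by
    linarith [h c, hG.re_inner_add_smul u w c]

theorem LinearMap.IsSymmetric.tsum_re_inner_add_smul {ι : Type*} {G : E →L[ℂ] E}
    (hG : (G : E →ₗ[ℂ] E).IsSymmetric) {u w : ι → E}
    (hu : Summable fun i => ⟪G (u i), u i⟫_ℂ) (huw : Summable fun i => ⟪G (u i), w i⟫_ℂ)
    (hw : Summable fun i => ⟪G (w i), w i⟫_ℂ) (c : ℂ) :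
    ∑' i, (⟪G (u i + c • w i), u i + c • w i⟫_ℂ).re =
      ∑' i, (⟪G (u i), u i⟫_ℂ).re + 2 * (c * ∑' i, ⟪G (u i), w i⟫_ℂ).re +
        ‖c‖ ^ 2 * ∑' i, (⟪G (w i), w i⟫_ℂ).re := by
  have hre {f : ι → ℂ} (hf : Summable f) : Summable fun i => (f i).re :=
    (Complex.hasSum_re hf.hasSum).summable
  simp only [hG.re_inner_add_smul]
  rw [Summable.tsum_add ((hre hu).add ((hre (huw.mul_left c)).mul_left 2)) ((hre hw).mul_left _),
    Summable.tsum_add (hre hu) ((hre (huw.mul_left c)).mul_left 2), tsum_mul_left, tsum_mul_left,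
    ← Complex.re_tsum (huw.mul_left c), tsum_mul_left]

end QuadraticForm

section NormalEquation

variable {E F : Type*} [NormedAddCommGroup E] [InnerProductSpace ℂ E] [CompleteSpace E]
  [NormedAddCommGroup F] [InnerProductSpace ℂ F] [CompleteSpace F]
  {G : E →L[ℂ] E} {A : F →L[ℂ] E} {X₀ : E →L[ℂ] F}

omit [CompleteSpace E] [CompleteSpace F] in
theorem ContinuousLinearMap.comp_add_smul_sub_one_apply (X Δ : E →L[ℂ] F) (c : ℂ) (x : E) :
    (A ∘L (X + c • Δ) - 1) x = (A ∘L X - 1) x + c • A (Δ x) := by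
  simp only [sub_apply, comp_apply, add_apply, smul_apply, map_add, map_smul]
  abel

theorem IsSelfAdjoint.re_inner_le_of_adjoint_comp_eq_zero (hG : IsSelfAdjoint G)
    (hpos : ∀ z, 0 ≤ (⟪G (A z), A z⟫_ℂ).re) (hN : A.adjoint ∘L G ∘L (A ∘L X₀ - 1) = 0)
    (X : E →L[ℂ] F) (x : E) :
    (⟪G ((A ∘L X₀ - 1) x), (A ∘L X₀ - 1) x⟫_ℂ).re ≤
      (⟪G ((A ∘L X - 1) x), (A ∘L X - 1) x⟫_ℂ).re := by
  have hcross : ⟪G ((A ∘L X₀ - 1) x), A ((X - X₀) x)⟫_ℂ = 0 := by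
    simpa [adjoint_inner_left] using congr(⟪$hN x, (X - X₀) x⟫_ℂ)
  have := hG.isSymmetric.re_inner_add_smul ((A ∘L X₀ - 1) x) (A ((X - X₀) x)) 1
  rw [← comp_add_smul_sub_one_apply, one_smul, add_sub_cancel] at this
  rw [this, hcross, mul_zero, Complex.zero_re, norm_one, one_pow, one_mul]
  linarith [hpos ((X - X₀) x)]

theorem IsSelfAdjoint.nonneg_and_adjoint_comp_eq_zero_of_forall_le (hG : IsSelfAdjoint G)
    (h : ∀ (X : E →L[ℂ] F) (x : E), (⟪G ((A ∘L X₀ - 1) x), (A ∘L X₀ - 1) x⟫_ℂ).re ≤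
      (⟪G ((A ∘L X - 1) x), (A ∘L X - 1) x⟫_ℂ).re) :
    (∀ z, 0 ≤ (⟪G (A z), A z⟫_ℂ).re) ∧ A.adjoint ∘L G ∘L (A ∘L X₀ - 1) = 0 := by
  have key {x : E} (hx : x ≠ 0) (z : F) :
      0 ≤ (⟪G (A z), A z⟫_ℂ).re ∧ ⟪G ((A ∘L X₀ - 1) x), A z⟫_ℂ = 0 := by
    obtain ⟨φ, hφ⟩ := SeparatingDual.exists_eq_one (R := ℂ) hx
    refine hG.isSymmetric.nonneg_and_inner_eq_zero_of_forall_le fun c => ?_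
    simpa only [comp_add_smul_sub_one_apply, smulRight_apply, hφ, one_smul] using
      h (X₀ + c • φ.smulRight z) x
  constructor
  · intro z
    rcases subsingleton_or_nontrivial E with hE | hE
    · simp [Subsingleton.elim (A z) 0]
    · obtain ⟨x, hx⟩ := exists_ne (0 : E)
      exact (key hx z).1
  · ext x
    rcases eq_or_ne x 0 with rfl | hx
    · simp
    · refine ext_inner_right ℂ fun z => ?_
      rw [comp_apply, comp_apply, adjoint_inner_left, (key hx z).2, zero_apply, inner_zero_left]

theorem IsSelfAdjoint.adjoint_comp_eq_zero_of_forall_tsum_le {ι : Type*} (hG : IsSelfAdjoint G)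
    (b : HilbertBasis ι ℂ E)
    (hsum : ∀ T R : E →L[ℂ] E, Summable fun i => ⟪G (T (b i)), R (b i)⟫_ℂ)
    (h : ∀ X : E →L[ℂ] F, ∑' i, (⟪G ((A ∘L X₀ - 1) (b i)), (A ∘L X₀ - 1) (b i)⟫_ℂ).re ≤
      ∑' i, (⟪G ((A ∘L X - 1) (b i)), (A ∘L X - 1) (b i)⟫_ℂ).re) :
    A.adjoint ∘L G ∘L (A ∘L X₀ - 1) = 0 := by
  have hcross (Δ : E →L[ℂ] F) : ∑' i, ⟪G ((A ∘L X₀ - 1) (b i)), A (Δ (b i))⟫_ℂ = 0 := by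
    refine (Complex.nonneg_and_eq_zero_of_forall_quadratic_nonneg
      (a := ∑' i, (⟪G (A (Δ (b i))), A (Δ (b i))⟫_ℂ).re) fun c => ?_).2
    have hc := h (X₀ + c • Δ)
    simp only [comp_add_smul_sub_one_apply] at hc
    have := hG.isSymmetric.tsum_re_inner_add_smul (u := fun i => (A ∘L X₀ - 1) (b i))
      (w := fun i => A (Δ (b i))) (hsum _ _) (hsum _ (A ∘L Δ)) (hsum (A ∘L Δ) (A ∘L Δ)) c
    linarith
  have hzero : (A ∘L X₀ - 1).adjoint ∘L G ∘L A = 0 := by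
    ext z
    refine ext_inner_left ℂ fun u => ?_
    -- for `Δ = ⟪u, ·⟫ z` the cross term is `⟪u, (AX₀ - 1)* G A z⟫`, by Parseval
    have hu := hcross ((innerSL ℂ u).smulRight z)
    simp only [smulRight_apply, innerSL_apply_apply, map_smul, inner_smul_right,
      ← adjoint_inner_right, hG.adjoint_eq, b.tsum_inner_mul_inner] at hu
    simpa using hu
  calc A.adjoint ∘L G ∘L (A ∘L X₀ - 1) = ((A ∘L X₀ - 1).adjoint ∘L G ∘L A).adjoint := by
        simp only [adjoint_comp, adjoint_adjoint, hG.adjoint_eq, comp_assoc]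
    _ = 0 := by rw [hzero, map_zero]

end NormalEquation

theorem ContinuousLinearMap.exists_comp_eq_of_injective_of_range_le {𝕜 E F G : Type*}
    [NontriviallyNormedField 𝕜] [NormedAddCommGroup E] [NormedSpace 𝕜 E] [CompleteSpace E]
    [NormedAddCommGroup F] [NormedSpace 𝕜 F]
    [NormedAddCommGroup G] [NormedSpace 𝕜 G] [CompleteSpace G]
    {T : E →L[𝕜] F} (hT : Function.Injective T) {B : G →L[𝕜] F} (hB : B.range ≤ T.range) :
    ∃ C : G →L[𝕜] E, T ∘L C = B := by
  let C : G →ₗ[𝕜] E := (LinearEquiv.ofInjective (T : E →ₗ[𝕜] F) hT).symm.toLinearMap ∘ₗ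
    (B : G →ₗ[𝕜] F).codRestrict _ fun x => hB ⟨x, rfl⟩
  have hTC (x : G) : T (C x) = B x :=
    congrArg Subtype.val ((LinearEquiv.ofInjective (T : E →ₗ[𝕜] F) hT).apply_symm_apply _)
  refine ⟨⟨C, C.continuous_of_seq_closed_graph fun u x y hu hCu => hT ?_⟩, ext hTC⟩
  rw [hTC]
  refine tendsto_nhds_unique ((T.continuous.tendsto y).comp hCu) ?_
  simpa only [Function.comp_def, hTC] using (B.continuous.tendsto x).comp hu

theorem ContinuousLinearMap.exists_comp_eq_of_range_le {𝕜 E F G : Type*} [RCLike 𝕜]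
    [NormedAddCommGroup E] [InnerProductSpace 𝕜 E] [CompleteSpace E]
    [NormedAddCommGroup F] [NormedSpace 𝕜 F]
    [NormedAddCommGroup G] [NormedSpace 𝕜 G] [CompleteSpace G]
    {T : E →L[𝕜] F} {B : G →L[𝕜] F} (hB : B.range ≤ T.range) :
    ∃ C : G →L[𝕜] E, T ∘L C = B := by
  have : CompleteSpace T.ker := T.isClosed_ker.completeSpace_coe
  set T' : T.kerᗮ →L[𝕜] F := T ∘L T.kerᗮ.subtypeL
  have hT' : Function.Injective T' := (injective_iff_map_eq_zero T').2 fun v hv =>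
    Subtype.ext (T.ker.orthogonal_disjoint.le_bot ⟨hv, v.2⟩ : (v : E) = 0)
  have hrange : T.range ≤ T'.range := by
    rintro _ ⟨e, rfl⟩
    obtain ⟨k, hk, v, hv, rfl⟩ := T.ker.exists_add_mem_mem_orthogonal e
    exact ⟨⟨v, hv⟩, by simp [T', show T k = 0 from hk]⟩
  obtain ⟨C, hC⟩ := exists_comp_eq_of_injective_of_range_le hT' (hB.trans hrange)
  exact ⟨T.kerᗮ.subtypeL ∘L C, hC⟩

section HilbertSchmidt

variable {ι : Type*}

theorem HilbertBasis.hasSum_norm_inner_sq {E : Type*} [NormedAddCommGroup E]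
    [InnerProductSpace ℂ E] (b : HilbertBasis ι ℂ E) (x : E) :
    HasSum (fun i => ‖⟪b i, x⟫_ℂ‖ ^ 2) (‖x‖ ^ 2) := by
  simpa [b.repr_apply_apply] using lp.hasSum_norm (p := 2) (by norm_num) (b.repr x)

theorem IsHilbertSchmidt.adjoint {b : HilbertBasis ι ℂ H} {S : H →L[ℂ] H}
    (hS : IsHilbertSchmidt b S) : IsHilbertSchmidt b S.adjoint := by
  set f : ι × ι → ℝ := fun p => ‖⟪S (b p.1), b p.2⟫_ℂ‖ ^ 2
  have hf : 0 ≤ f := fun p => by positivity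
  have row (i : ι) : HasSum (fun j => f (i, j)) (‖S (b i)‖ ^ 2) := by
    simpa only [f, norm_inner_symm] using b.hasSum_norm_inner_sq (S (b i))
  have col (j : ι) : HasSum (fun i => f (i, j)) (‖S.adjoint (b j)‖ ^ 2) := by
    simpa only [f, ← adjoint_inner_right] using b.hasSum_norm_inner_sq (S.adjoint (b j))
  have hsum : Summable f := (summable_prod_of_nonneg hf).2
    ⟨fun i => (row i).summable, hS.congr fun i => (row i).tsum_eq.symm⟩
  simpa only [IsHilbertSchmidt, Prod.swap_prod_mk, (col _).tsum_eq] using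
    ((summable_prod_of_nonneg fun p => hf p.swap).1 hsum.prod_symm).2

omit [CompleteSpace H] in
theorem IsHilbertSchmidt.comp_left {b : HilbertBasis ι ℂ H} {S : H →L[ℂ] H}
    (hS : IsHilbertSchmidt b S) (T : H →L[ℂ] H) : IsHilbertSchmidt b (T ∘L S) := by
  refine .of_nonneg_of_le (fun i => by positivity) (fun i => ?_) (hS.mul_left (‖T‖ ^ 2))
  rw [← mul_pow]
  exact pow_le_pow_left₀ (norm_nonneg _) (T.le_opNorm _) 2

theorem IsHilbertSchmidt.comp_right {b : HilbertBasis ι ℂ H} {S : H →L[ℂ] H}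
    (hS : IsHilbertSchmidt b S) (T : H →L[ℂ] H) : IsHilbertSchmidt b (S ∘L T) := by
  simpa only [adjoint_comp, adjoint_adjoint] using (hS.adjoint.comp_left T.adjoint).adjoint

omit [CompleteSpace H] in
theorem IsTraceClass.comp_left {b : HilbertBasis ι ℂ H} {W : H →L[ℂ] H}
    (hW : IsTraceClass b W) (T : H →L[ℂ] H) : IsTraceClass b (T ∘L W) := by
  obtain ⟨S₁, S₂, hS₁, hS₂, rfl⟩ := hW
  exact ⟨T ∘L S₁, S₂, hS₁.comp_left T, hS₂, rfl⟩

theorem IsTraceClass.summable_inner {b : HilbertBasis ι ℂ H} {W : H →L[ℂ] H}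
    (hW : IsTraceClass b W) (T R : H →L[ℂ] H) :
    Summable fun i => ⟪W (T (b i)), R (b i)⟫_ℂ := by
  obtain ⟨S₁, S₂, hS₁, hS₂, rfl⟩ := hW
  refine .of_norm_bounded ((((hS₂.comp_right T).add (hS₁.adjoint.comp_right R)).div_const 2))
    fun i => ?_
  rw [comp_apply, ← adjoint_inner_right]
  have := norm_inner_le_norm (𝕜 := ℂ) (S₂ (T (b i))) (S₁.adjoint (R (b i)))
  simp only [comp_apply]
  nlinarith [sq_nonneg (‖S₂ (T (b i))‖ - ‖S₁.adjoint (R (b i))‖)]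

end HilbertSchmidt

theorem exists_adjoint_comp_eq_zero_of_forall_eq_add {E F : Type*} [NormedAddCommGroup E]
    [InnerProductSpace ℂ E] [CompleteSpace E] [NormedAddCommGroup F] [InnerProductSpace ℂ F]
    [CompleteSpace F] {G : E →L[ℂ] E} {A : F →L[ℂ] E}
    (h : ∀ x, ∃ z y, A.adjoint (G y) = 0 ∧ x = A z + y) :
    ∃ X₀ : E →L[ℂ] F, A.adjoint ∘L G ∘L (A ∘L X₀ - 1) = 0 := by
  have hrange : (A.adjoint ∘L G).range ≤ (A.adjoint ∘L G ∘L A).range := by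
    rintro _ ⟨x, rfl⟩
    obtain ⟨z, y, hy, rfl⟩ := h x
    exact ⟨z, by simp [hy]⟩
  obtain ⟨C, hC⟩ := ContinuousLinearMap.exists_comp_eq_of_range_le hrange
  refine ⟨C, ?_⟩
  ext x
  simpa [sub_eq_zero] using congr($hC x)

theorem ContinuousLinearMap.apply_apply_of_comp_self_eq_one {𝕜 E : Type*} [RCLike 𝕜]
    [NormedAddCommGroup E] [NormedSpace 𝕜 E] {J : E →L[𝕜] E} (hJ2 : J ∘L J = 1) (x : E) :
    J (J x) = x := by
  simpa using congr($hJ2 x)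

theorem ContinuousLinearMap.inner_adjoint_comp_comp_apply {𝕜 E F : Type*} [RCLike 𝕜]
    [NormedAddCommGroup E] [InnerProductSpace 𝕜 E] [CompleteSpace E] [NormedAddCommGroup F]
    [InnerProductSpace 𝕜 F] [CompleteSpace F] (T : E →L[𝕜] F) (G : F →L[𝕜] F) (x : E) :
    ⟪(T.adjoint ∘L G ∘L T) x, x⟫_𝕜 = ⟪G (T x), T x⟫_𝕜 := by
  rw [comp_apply, adjoint_inner_left, comp_apply]

section Krein

variable {J W : H →L[ℂ] H}

theorem IsSelfAdjoint.comp_of_kreinSelfAdjoint (hJ : IsSelfAdjoint J) (hJ2 : J ∘L J = 1)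
    (hW : J ∘L W.adjoint ∘L J = W) : IsSelfAdjoint (J ∘L W) := by
  have hJJ := apply_apply_of_comp_self_eq_one hJ2
  rw [isSelfAdjoint_iff', adjoint_comp, hJ.adjoint_eq]
  nth_rewrite 2 [← hW]
  ext x
  simp [hJJ]

theorem kreinPositive_comp_iff (hJ : IsSelfAdjoint J) (hJ2 : J ∘L J = 1) {S : H →L[ℂ] H}
    (hS : IsSelfAdjoint S) : KreinPositive J (J ∘L S) ↔ ∀ x, 0 ≤ (⟪S x, x⟫_ℂ).re := by
  have hJJ := apply_apply_of_comp_self_eq_one hJ2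
  have hadj : kreinAdjoint J J (J ∘L S) = J ∘L S := by
    ext x
    simp [kreinAdjoint, hJ.adjoint_eq, hS.adjoint_eq, hJJ]
  simp only [KreinPositive, hadj, comp_apply, hJJ, true_and]

omit [CompleteSpace H] in
theorem trJ_comp {ι : Type*} (hJ2 : J ∘L J = 1) (b : HilbertBasis ι ℂ H) (S : H →L[ℂ] H) :
    trJ J b (J ∘L S) = ∑' i, (⟪S (b i), b i⟫_ℂ).re := by
  have hJJ := apply_apply_of_comp_self_eq_one hJ2
  simp only [trJ, comp_apply, hJJ]

theorem kreinAdjoint_apply_eq_zero_iff_s7 {JK : K →L[ℂ] K} (hJK2 : JK ∘L JK = 1) (A : K →L[ℂ] H)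
    (y : H) : kreinAdjoint JK J A y = 0 ↔ A.adjoint (J y) = 0 := by
  refine ⟨fun h => ?_, fun h => by simp [kreinAdjoint, h]⟩
  simpa [kreinAdjoint, apply_apply_of_comp_self_eq_one hJK2] using congr(JK $h)

omit [CompleteSpace K] in
theorem errOp_eq_comp (A : K →L[ℂ] H) (X : H →L[ℂ] K) :
    errOp J A W X = J ∘L ((A ∘L X - 1).adjoint ∘L (J ∘L W) ∘L (A ∘L X - 1)) :=
  rfl

omit [CompleteSpace K] in
theorem kreinPositive_errOp_sub_iff (hJ : IsSelfAdjoint J) (hJ2 : J ∘L J = 1)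
    (hW : J ∘L W.adjoint ∘L J = W) (A : K →L[ℂ] H) (X₀ X : H →L[ℂ] K) :
    KreinPositive J (errOp J A W X - errOp J A W X₀) ↔
      ∀ x, (⟪(J ∘L W) ((A ∘L X₀ - 1) x), (A ∘L X₀ - 1) x⟫_ℂ).re ≤
        (⟪(J ∘L W) ((A ∘L X - 1) x), (A ∘L X - 1) x⟫_ℂ).re := by
  have hG := hJ.comp_of_kreinSelfAdjoint hJ2 hW
  rw [errOp_eq_comp, errOp_eq_comp, ← comp_sub,
    kreinPositive_comp_iff hJ hJ2 ((hG.adjoint_conj _).sub (hG.adjoint_conj _))]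
  simp only [sub_apply, inner_sub_left, Complex.sub_re, inner_adjoint_comp_comp_apply,
    sub_nonneg]

omit [CompleteSpace K] in
theorem trJ_errOp {ι : Type*} (hJ2 : J ∘L J = 1) (b : HilbertBasis ι ℂ H) (A : K →L[ℂ] H)
    (X : H →L[ℂ] K) :
    trJ J b (errOp J A W X) =
      ∑' i, (⟪(J ∘L W) ((A ∘L X - 1) (b i)), (A ∘L X - 1) (b i)⟫_ℂ).re := by
  simp only [errOp_eq_comp, trJ_comp hJ2, inner_adjoint_comp_comp_apply]

end Krein

theorem stmt7_general {ι : Type*}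
    (JH : H →L[ℂ] H) (hJHsa : IsSelfAdjoint JH) (hJH2 : JH ∘L JH = 1)
    (JK : K →L[ℂ] K) (hJK2 : JK ∘L JK = 1)
    (b : HilbertBasis ι ℂ H)
    (A : K →L[ℂ] H) (W : H →L[ℂ] H)
    (hW : JH ∘L (ContinuousLinearMap.adjoint W) ∘L JH = W)
    (hWtc : IsTraceClass b W) :
    List.TFAE
      [ -- (i)
        (∀ z : K, 0 ≤ (inner ℂ (JH (W (A z))) (A z) : ℂ).re) ∧
          ∃ X₀ : H →L[ℂ] K, ∀ X : H →L[ℂ] K,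
            trJ JH b (errOp JH A W X₀) ≤ trJ JH b (errOp JH A W X),
        -- (ii)
        (∀ z : K, 0 ≤ (inner ℂ (JH (W (A z))) (A z) : ℂ).re) ∧
          ∀ x : H, ∃ (z : K) (h : H),
            kreinAdjoint JK JH A (W h) = 0 ∧ x = A z + h,
        -- (iii)
        ∃ X₀ : H →L[ℂ] K, ∀ X : H →L[ℂ] K,
          KreinPositive JH (errOp JH A W X - errOp JH A W X₀) ]
    ∧
    ∀ X₀ : H →L[ℂ] K,
      (∀ X : H →L[ℂ] K, KreinPositive JH (errOp JH A W X - errOp JH A W X₀)) →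
      ∀ X : H →L[ℂ] K, trJ JH b (errOp JH A W X₀) ≤ trJ JH b (errOp JH A W X) := by
  have hG := hJHsa.comp_of_kreinSelfAdjoint hJH2 hW
  have hsum := (hWtc.comp_left JH).summable_inner
  have hKP := kreinPositive_errOp_sub_iff hJHsa hJH2 hW A
  have htr := trJ_errOp hJH2 b A (W := W)
  have hker := kreinAdjoint_apply_eq_zero_iff_s7 hJK2 A (J := JH)
  have min_of_kreinPositive (X₀ : H →L[ℂ] K)
      (hX₀ : ∀ X, KreinPositive JH (errOp JH A W X - errOp JH A W X₀)) (X : H →L[ℂ] K) :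
      trJ JH b (errOp JH A W X₀) ≤ trJ JH b (errOp JH A W X) := by
    rw [htr, htr]
    exact Summable.tsum_le_tsum (fun i => (hKP X₀ X).1 (hX₀ X) (b i))
      (Complex.hasSum_re (hsum _ _).hasSum).summable
      (Complex.hasSum_re (hsum _ _).hasSum).summable
  refine ⟨?_, min_of_kreinPositive⟩
  tfae_have 1 → 2 := by
    rintro ⟨hpos, X₀, hmin⟩
    have hN := hG.adjoint_comp_eq_zero_of_forall_tsum_le b hsum fun X => by
      simpa only [htr] using hmin X
    refine ⟨hpos, fun x => ⟨X₀ x, x - A (X₀ x), ?_, by abel⟩⟩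
    have hx := congr($hN x)
    simp only [comp_apply, sub_apply, one_apply_eq_self, map_sub, zero_apply] at hx
    rw [hker, map_sub, map_sub, map_sub, ← neg_sub, hx, neg_zero]
  tfae_have 2 → 3 := by
    rintro ⟨hpos, hdec⟩
    obtain ⟨X₀, hN⟩ := exists_adjoint_comp_eq_zero_of_forall_eq_add (G := JH ∘L W) fun x => by
      obtain ⟨z, y, hy, rfl⟩ := hdec x
      exact ⟨z, y, (hker _).1 hy, rfl⟩
    exact ⟨X₀, fun X => (hKP X₀ X).2 (hG.re_inner_le_of_adjoint_comp_eq_zero hpos hN X)⟩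
  tfae_have 3 → 1 := by
    rintro ⟨X₀, hX₀⟩
    exact ⟨(hG.nonneg_and_adjoint_comp_eq_zero_of_forall_le fun X => (hKP X₀ X).1 (hX₀ X)).1,
      X₀, min_of_kreinPositive X₀ hX₀⟩
  tfae_finish

/-- for trace-class Krein-selfadjoint `W`, the equivalence of (i) existence of
a minimizer of the `J`-trace functional with `ran A` `W`-nonnegative, (ii) `ran A`
`W`-nonnegative and `ran A + ker(A^# W) = H`, (iii) existence of a Krein-order minimizer;
and any Krein-order minimizer attains the `J`-trace minimum. -/
theorem stmt7 {ι : Type*}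
    [TopologicalSpace.SeparableSpace H] [TopologicalSpace.SeparableSpace K]
    (JH : H →L[ℂ] H) (hJHsa : IsSelfAdjoint JH) (hJH2 : JH ∘L JH = 1)
    (JK : K →L[ℂ] K) (hJKsa : IsSelfAdjoint JK) (hJK2 : JK ∘L JK = 1)
    (b : HilbertBasis ι ℂ H)
    (A : K →L[ℂ] H) (W : H →L[ℂ] H)
    (hW : JH ∘L (ContinuousLinearMap.adjoint W) ∘L JH = W)
    (hWtc : IsTraceClass b W) :
    List.TFAE
      [ -- (i)
        (∀ z : K, 0 ≤ (inner ℂ (JH (W (A z))) (A z) : ℂ).re) ∧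
          ∃ X₀ : H →L[ℂ] K, ∀ X : H →L[ℂ] K,
            trJ JH b (errOp JH A W X₀) ≤ trJ JH b (errOp JH A W X),
        -- (ii)
        (∀ z : K, 0 ≤ (inner ℂ (JH (W (A z))) (A z) : ℂ).re) ∧
          ∀ x : H, ∃ (z : K) (h : H),
            kreinAdjoint JK JH A (W h) = 0 ∧ x = A z + h,
        -- (iii)
        ∃ X₀ : H →L[ℂ] K, ∀ X : H →L[ℂ] K,
          KreinPositive JH (errOp JH A W X - errOp JH A W X₀) ]
    ∧
    ∀ X₀ : H →L[ℂ] K,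
      (∀ X : H →L[ℂ] K, KreinPositive JH (errOp JH A W X - errOp JH A W X₀)) →
      ∀ X : H →L[ℂ] K, trJ JH b (errOp JH A W X₀) ≤ trJ JH b (errOp JH A W X) :=
  stmt7_general JH hJHsa hJH2 JK hJK2 b A W hW hWtc
end
end
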